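/- arXiv:2511.13500 — 3 statements merged into one kernel-verified Lean document; each statement's English description precedes it below -/
import Mathlib

section
/- Let Λ = aℤ^{1/2} × bℤ^{1/2} ⊆ ℝ², where a, b, c are positive numbers with a²c ∈ πℤ, b²c ∈ πℤ, and 0 < c < π. Then Λ does not do Gabor phase retrieval. -/
open MeasureTheory Complex Filter Set

noncomputable section

/-- The Gabor transform of `f` with the Gaussian window `φ(x) = e^{-π x²}`. -/
def GaborT (f : ℝ → ℂ) (t ω : ℝ) : ℂ :=
  ∫ x : ℝ, f x * Complex.exp (-(Real.pi : ℂ) * ((x : ℂ) - (t : ℂ)) ^ 2) *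
    Complex.exp (-2 * (Real.pi : ℂ) * Complex.I * (x : ℂ) * (ω : ℂ))

/-- A set `Λ ⊆ ℝ²` does Gabor phase retrieval. -/
def DoesGaborPR (Λ : Set (ℝ × ℝ)) : Prop :=
  ∀ f₁ f₂ : ℝ → ℂ, MemLp f₁ 2 volume → MemLp f₂ 2 volume →
    (∀ p ∈ Λ, ‖GaborT f₁ p.1 p.2‖ = ‖GaborT f₂ p.1 p.2‖) →
    ∃ α : ℝ, f₁ =ᵐ[volume] fun x => Complex.exp ((α : ℂ) * Complex.I) * f₂ x

/-- `aℤ^ν = {± a n^ν : n ∈ ℤ, n ≥ 0}`. -/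
def aZpow (a ν : ℝ) : Set ℝ :=
  {x | ∃ n : ℕ, x = a * (n : ℝ) ^ ν ∨ x = -(a * (n : ℝ) ^ ν)}

/-! ### Auxiliary lemmas -/

lemma integrand_eq (δ : ℂ) (t ω x : ℝ) :
    cexp (-δ * (x:ℂ)^2) * cexp (-(Real.pi:ℂ) * ((x:ℂ) - t)^2) *
      cexp (-2 * (Real.pi:ℂ) * I * x * ω)
    = cexp (-(δ + Real.pi) * (x:ℂ)^2 + (2*(Real.pi:ℂ)*t - 2*(Real.pi:ℂ)*I*ω) * x
        + (-(Real.pi:ℂ) * t^2)) := by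
  rw [← Complex.exp_add, ← Complex.exp_add]
  congr 1
  ring

lemma gaborT_gauss (δ : ℂ) (hδ : 0 < (δ + Real.pi).re) (t ω : ℝ) :
    GaborT (fun x : ℝ => cexp (-δ * (x:ℂ)^2)) t ω
      = ((Real.pi:ℂ) / (δ + Real.pi)) ^ (1/2 : ℂ) *
        cexp ((2*(Real.pi:ℂ)*t - 2*(Real.pi:ℂ)*I*ω)^2 / (4 * (δ + Real.pi))
          - (Real.pi:ℂ) * t^2) := by
  have hb : (-(δ + (Real.pi:ℂ))).re < 0 := by
    simp only [neg_re]; linarith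
  unfold GaborT
  simp_rw [integrand_eq δ t ω]
  rw [integral_cexp_quadratic hb]
  congr 1
  · rw [neg_neg]
  · congr 1
    rw [show (4 : ℂ) * -(δ + Real.pi) = -(4*(δ+Real.pi)) by ring, div_neg, sub_neg_eq_add]
    ring

lemma gaborT_conj (δ : ℂ) (t ω : ℝ) :
    GaborT (fun x : ℝ => cexp (-(starRingEnd ℂ) δ * (x:ℂ)^2)) t ω
      = (starRingEnd ℂ) (GaborT (fun x : ℝ => cexp (-δ * (x:ℂ)^2)) t (-ω)) := by
  unfold GaborT
  rw [← integral_conj]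
  congr 1 with x
  simp only [map_mul, ← Complex.exp_conj, map_neg, map_mul, map_pow, map_sub, map_ofNat,
    Complex.conj_ofReal, Complex.conj_I, Complex.ofReal_neg]
  ring_nf

lemma gaborT_add_mul (δ₁ δ₂ γ : ℂ) (h1 : 0 < (δ₁ + Real.pi).re) (h2 : 0 < (δ₂ + Real.pi).re)
    (t ω : ℝ) :
    GaborT (fun x : ℝ => cexp (-δ₁ * (x:ℂ)^2) + γ * cexp (-δ₂ * (x:ℂ)^2)) t ω
      = GaborT (fun x : ℝ => cexp (-δ₁ * (x:ℂ)^2)) t ω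
        + γ * GaborT (fun x : ℝ => cexp (-δ₂ * (x:ℂ)^2)) t ω := by
  have key : ∀ δ : ℂ, 0 < (δ + Real.pi).re → Integrable (fun x : ℝ =>
      cexp (-δ * (x:ℂ)^2) * cexp (-(Real.pi:ℂ) * ((x:ℂ) - t)^2) *
        cexp (-2 * (Real.pi:ℂ) * I * x * ω)) volume := by
    intro δ hδ
    have := integrable_cexp_quadratic hδ (2*(Real.pi:ℂ)*t - 2*(Real.pi:ℂ)*I*ω)
      (-(Real.pi:ℂ) * t^2)
    apply this.congr
    filter_upwards with x
    rw [← Complex.exp_add, ← Complex.exp_add]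
    congr 1
    ring
  unfold GaborT
  rw [← MeasureTheory.integral_const_mul, ← integral_add (key δ₁ h1) ((key δ₂ h2).const_mul γ)]
  congr 1 with x
  ring

lemma memLp_gauss (δ : ℂ) (hδ : 0 < δ.re) :
    MemLp (fun x : ℝ => cexp (-δ * (x:ℂ)^2)) 2 volume := by
  have hcont : Continuous fun x : ℝ => cexp (-δ * (x:ℂ)^2) := by
    continuity
  rw [memLp_two_iff_integrable_sq_norm hcont.aestronglyMeasurable]
  have : Integrable (fun x : ℝ => Real.exp (-(2 * δ.re) * x^2)) volume :=
    integrable_exp_neg_mul_sq (by linarith)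
  apply this.congr
  filter_upwards with x
  rw [Complex.norm_exp,
    show Real.exp ((-δ * (x:ℂ)^2).re) ^ 2 = Real.exp ((-δ * (x:ℂ)^2).re + (-δ * (x:ℂ)^2).re) by
      rw [Real.exp_add]; ring]
  congr 1
  simp [Complex.neg_re, Complex.mul_re, ← Complex.ofReal_pow]
  ring

lemma abs_add_eq_abs_sub_of_re (X Y : ℂ) (h : (X * (starRingEnd ℂ) Y).re = 0) :
    ‖X + Y‖ = ‖X - Y‖ := by
  rw [Complex.norm_def, Complex.norm_def]
  congr 1
  rw [sub_eq_add_neg, Complex.normSq_add, Complex.normSq_add]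
  simp [h]

lemma sq_of_mem_aZpow {a ν x : ℝ} (hx : x ∈ aZpow a ν) :
    ∃ n : ℕ, x ^ 2 = a^2 * ((n:ℝ) ^ ν)^2 := by
  obtain ⟨n, h | h⟩ := hx
  · exact ⟨n, by rw [h]; ring⟩
  · exact ⟨n, by rw [h]; ring⟩

theorem no_pr_of_commensurable_lattice (a b c : ℝ) (ha : 0 < a) (hb : 0 < b)
    (hc0 : 0 < c) (hcπ : c < Real.pi)
    (hac : ∃ k : ℤ, a ^ 2 * c = (k : ℝ) * Real.pi)
    (hbc : ∃ k : ℤ, b ^ 2 * c = (k : ℝ) * Real.pi) :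
    ¬ DoesGaborPR (aZpow a (1/2) ×ˢ aZpow b (1/2)) := by
  intro hPR
  obtain ⟨k, hk⟩ := hac
  obtain ⟨k', hk'⟩ := hbc
  have hπ : (0:ℝ) < Real.pi := Real.pi_pos
  set q : ℝ := Real.pi^2 / c with hq_def
  have hq0 : 0 < q := by positivity
  have hqπ : Real.pi < q := by
    rw [hq_def, lt_div_iff₀ hc0]
    calc Real.pi * c < Real.pi * Real.pi := by nlinarith
    _ = Real.pi ^ 2 := by ring
  set δ : ℂ := ((q - Real.pi : ℝ) : ℂ) + (q : ℝ) * I with hδ_def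
  have hδre : 0 < δ.re := by simp [hδ_def]; linarith
  have hδim : δ.im = q := by simp [hδ_def]
  have hδcre : 0 < ((starRingEnd ℂ) δ).re := by rwa [Complex.conj_re]
  have hδπ : 0 < (δ + Real.pi).re := by simp [Complex.add_re]; linarith
  have hδcπ : 0 < ((starRingEnd ℂ) δ + Real.pi).re := by simp [Complex.add_re, Complex.conj_re]
                                                         linarith
  set γ : ℂ := -1 - I with hγ_def
  set f₁ : ℝ → ℂ := fun x => cexp (-δ * (x:ℂ)^2) + γ * cexp (-(starRingEnd ℂ) δ * (x:ℂ)^2)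
    with hf₁
  set f₂ : ℝ → ℂ := fun x => cexp (-δ * (x:ℂ)^2) + (-γ) * cexp (-(starRingEnd ℂ) δ * (x:ℂ)^2)
    with hf₂
  have hM₁ : MemLp f₁ 2 volume :=
    (memLp_gauss δ hδre).add (((memLp_gauss _ hδcre).const_mul γ))
  have hM₂ : MemLp f₂ 2 volume :=
    (memLp_gauss δ hδre).add (((memLp_gauss _ hδcre).const_mul (-γ)))
  -- the basic complex constants
  have hs_eq : δ + (Real.pi : ℂ) = (q : ℝ) * (1 + I) := by
    rw [hδ_def]; push_cast; ring
  have hcC : (c:ℂ) ≠ 0 := by exact_mod_cast hc0.ne'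
  have hqc : (q:ℂ) * (c:ℂ) = (Real.pi:ℂ)^2 := by
    rw [hq_def]; push_cast; field_simp
  have hs_ne : δ + (Real.pi : ℂ) ≠ 0 := by
    intro h; rw [h] at hδπ; simp at hδπ
  have hπs_ne : (Real.pi:ℂ) / (δ + Real.pi) ≠ 0 := by
    apply div_ne_zero _ hs_ne
    exact_mod_cast Real.pi_ne_zero
  -- main magnitude identity
  have hAbs : ∀ p ∈ (aZpow a (1/2) ×ˢ aZpow b (1/2) : Set (ℝ × ℝ)),
      ‖GaborT f₁ p.1 p.2‖ = ‖GaborT f₂ p.1 p.2‖ := by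
    rintro ⟨t, ω⟩ ⟨hT, hW⟩
    simp only
    obtain ⟨m, hm⟩ := sq_of_mem_aZpow hT
    obtain ⟨n, hn⟩ := sq_of_mem_aZpow hW
    have hmm : ((m:ℝ) ^ ((1:ℝ)/2))^2 = (m:ℝ) := by
      rw [← Real.rpow_natCast ((m:ℝ) ^ ((1:ℝ)/2)) 2, ← Real.rpow_mul (Nat.cast_nonneg m)]
      norm_num
    have hnn : ((n:ℝ) ^ ((1:ℝ)/2))^2 = (n:ℝ) := by
      rw [← Real.rpow_natCast ((n:ℝ) ^ ((1:ℝ)/2)) 2, ← Real.rpow_mul (Nat.cast_nonneg n)]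
      norm_num
    have ht2 : t^2 = a^2 * (m:ℝ) := by rw [hm, hmm]
    have hω2 : ω^2 = b^2 * (n:ℝ) := by rw [hn, hnn]
    set S : ℝ := c * (t^2 - ω^2) with hS_def
    have hsin : Real.sin S = 0 := by
      have : S = ((k * (m:ℤ) - k' * (n:ℤ) : ℤ) : ℝ) * Real.pi := by
        rw [hS_def, ht2, hω2]
        push_cast
        linear_combination (m:ℝ) * hk - (n:ℝ) * hk'
      rw [this]
      exact Real.sin_int_mul_pi _
    set R : ℝ := S - 2 * Real.pi * t^2 with hR_def
    -- Gabor transforms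
    set A : ℝ → ℂ := fun w => GaborT (fun x : ℝ => cexp (-δ * (x:ℂ)^2)) t w with hA_def
    have hG1 : GaborT f₁ t ω = A ω + γ * (starRingEnd ℂ) (A (-ω)) := by
      rw [hf₁, gaborT_add_mul δ _ γ hδπ hδcπ, gaborT_conj]
    have hG2 : GaborT f₂ t ω = A ω - γ * (starRingEnd ℂ) (A (-ω)) := by
      rw [hf₂, gaborT_add_mul δ _ (-γ) hδπ hδcπ, gaborT_conj]
      ring
    rw [hG1, hG2]
    apply abs_add_eq_abs_sub_of_re
    have hconjY : (starRingEnd ℂ) (γ * (starRingEnd ℂ) (A (-ω)))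
        = (starRingEnd ℂ) γ * A (-ω) := by
      rw [map_mul, Complex.conj_conj]
    rw [hconjY]
    -- compute A ω * A (-ω)
    have hAA : A ω * A (-ω) = ((Real.pi:ℂ) / (δ + Real.pi)) *
        cexp ((R:ℝ) + ((-S : ℝ):ℂ) * I) := by
      rw [hA_def]
      simp only
      rw [gaborT_gauss δ hδπ t ω, gaborT_gauss δ hδπ t (-ω)]
      have hhalf : ((Real.pi:ℂ)/(δ+Real.pi)) ^ (1/2:ℂ) * ((Real.pi:ℂ)/(δ+Real.pi)) ^ (1/2:ℂ)
          = (Real.pi:ℂ)/(δ+Real.pi) := by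
        rw [← Complex.cpow_add _ _ hπs_ne]
        norm_num
      rw [mul_mul_mul_comm, hhalf, ← Complex.exp_add]
      congr 1
      have h4s : (4:ℂ) * (δ + Real.pi) ≠ 0 := by
        simp only [ne_eq, mul_eq_zero]
        push_neg
        exact ⟨by norm_num, hs_ne⟩
      rw [show ∀ u v w z : ℂ, u/(4*(δ+Real.pi)) - w + (v/(4*(δ+Real.pi)) - z)
            = (u+v)/(4*(δ+Real.pi)) - (w+z) by intros; ring]
      congr 1
      have htC : ((t:ℂ))^2 = ((a:ℂ))^2 * (m:ℂ) := by exact_mod_cast congrArg Complex.ofReal ht2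
      have hωC : ((ω:ℂ))^2 = ((b:ℂ))^2 * (n:ℂ) := by exact_mod_cast congrArg Complex.ofReal hω2
      rw [sub_eq_iff_eq_add, div_eq_iff h4s, hs_eq, hR_def, hS_def]
      push_cast
      linear_combination (4*(Real.pi:ℂ)^2*((t:ℂ)^2+(ω:ℂ)^2)) * Complex.I_sq
        + (-(4*((t:ℂ)^2-(ω:ℂ)^2)*(1-I^2))) * hqc
    have hγc : (starRingEnd ℂ) γ = -1 + I := by
      rw [hγ_def]; simp
    have hγπ : (starRingEnd ℂ) γ * ((Real.pi:ℂ)/(δ+Real.pi)) = ((c/Real.pi : ℝ):ℂ) * I := by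
      have h1I : (1:ℂ) + I ≠ 0 := by
        intro h
        have := congrArg Complex.im h
        simp at this
      have hqC : (q:ℂ) ≠ 0 := by exact_mod_cast hq0.ne'
      have hπC : (Real.pi:ℂ) ≠ 0 := by exact_mod_cast Real.pi_ne_zero
      rw [hγc, hs_eq]
      push_cast
      field_simp
      linear_combination (-I - I^2) * hqc + (-(Real.pi:ℂ)^2) * Complex.I_sq
    rw [show A ω * ((starRingEnd ℂ) γ * A (-ω)) = (starRingEnd ℂ) γ * (A ω * A (-ω)) by ring,
      hAA, ← mul_assoc, hγπ]
    simp [Complex.exp_add, Complex.exp_mul_I, ← Complex.ofReal_exp, ← Complex.ofReal_cos,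
      ← Complex.ofReal_sin, Complex.mul_re, Complex.mul_im, Real.sin_neg, hsin]
    right
    rw [show -((S:ℂ)*I) = ((-S : ℝ):ℂ)*I by push_cast; ring, Complex.exp_ofReal_mul_I_im,
      Real.sin_neg, hsin, neg_zero]
  -- apply phase retrieval and derive a contradiction
  obtain ⟨α, hae⟩ := hPR f₁ f₂ hM₁ hM₂ hAbs
  set u : ℂ := cexp ((α:ℂ) * I) with hu_def
  have cgauss : ∀ δ' : ℂ, Continuous fun x : ℝ => cexp (-δ' * (x:ℂ)^2) := by
    intro δ'
    apply Complex.continuous_exp.comp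
    fun_prop
  have hcont₁ : Continuous f₁ := by
    rw [hf₁]; exact (cgauss δ).add (continuous_const.mul (cgauss _))
  have hcont₂ : Continuous fun x : ℝ => u * f₂ x := by
    rw [hf₂]
    exact continuous_const.mul ((cgauss δ).add (continuous_const.mul (cgauss _)))
  have heq : f₁ = fun x : ℝ => u * f₂ x := by
    exact (Continuous.ae_eq_iff_eq volume hcont₁ hcont₂).mp hae
  have key : ∀ x : ℝ, (1 - u) * cexp (-δ * (x:ℂ)^2)
      = -γ * (1 + u) * cexp (-(starRingEnd ℂ) δ * (x:ℂ)^2) := by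
    intro x
    have hx := congrFun heq x
    rw [hf₁, hf₂] at hx
    simp only at hx
    linear_combination hx
  have key0 : (1 - u) = -γ * (1 + u) := by
    have := key 0
    simpa using this
  by_cases hu1 : u = 1
  · rw [hu1] at key0
    simp [hγ_def] at key0
    have := congrArg Complex.im key0
    simp at this
  · have h1u : (1:ℂ) - u ≠ 0 := by
      intro h
      exact hu1 (sub_eq_zero.mp h).symm
    set x₀ : ℝ := Real.sqrt (Real.pi / (2*q)) with hx₀_def
    have hx₀ : x₀^2 = Real.pi / (2*q) := Real.sq_sqrt (by positivity)
    have h2 := key x₀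
    rw [← key0] at h2
    have hexp_eq := mul_left_cancel₀ h1u h2
    rw [Complex.exp_eq_exp_iff_exists_int] at hexp_eq
    obtain ⟨nn, hnn⟩ := hexp_eq
    have him := congrArg Complex.im hnn
    have hqx : q * x₀^2 = Real.pi/2 := by
      rw [hx₀]; field_simp
    simp [hδ_def, ← Complex.ofReal_pow] at him
    rw [hqx] at him
    have hodd : ((2*nn+1 : ℤ):ℝ) * Real.pi = 0 := by push_cast; linarith
    rcases mul_eq_zero.mp hodd with h | h
    · have : (2*nn+1 : ℤ) = 0 := by exact_mod_cast h
      omega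
    · exact Real.pi_ne_zero h
end
end

section
/- Let Λ = ∪_{l=1}^{2} ((t₀, ω₀) + ℝ(sinθ_l, cosθ_l)) ⊆ ℝ², where (t₀, ω₀) ∈ ℝ² and θ₁ − θ₂ ∈ ℚπ (i.e. (θ₁ − θ₂)/π is rational). Then there exists a non-constant entire function Q : ℂ → ℂ whose order is less than 2 and which takes real values at every point of Γ*_Λ. -/
open MeasureTheory Complex Filter Set

noncomputable section

/-- The maximum modulus `M(r) = max_{|z| ≤ r} |f(z)|` of `f` on the closed disc of radius `r`. -/
def maxModulus (f : ℂ → ℂ) (r : ℝ) : ℝ :=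
  sSup ((fun z => ‖f z‖) '' Metric.closedBall (0 : ℂ) r)

/-- The order `ϱ = limsup_{r→∞} log log M(r) / log r` of an entire function. -/
def entireOrder (f : ℂ → ℂ) : EReal :=
  limsup (fun r : ℝ => ((Real.log (Real.log (maxModulus f r)) / Real.log r : ℝ) : EReal)) atTop

/-- `Γ*_Λ = {x + iy : (y, x) ∈ Λ}`. -/
def GammaStar (Λ : Set (ℝ × ℝ)) : Set ℂ := {z | (z.im, z.re) ∈ Λ}

/-- The full line `(t, ω) + ℝ (sin θ, cos θ)`. -/
def fullLine (t ω θ : ℝ) : Set (ℝ × ℝ) :=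
  {p | ∃ r : ℝ, p = (t + r * Real.sin θ, ω + r * Real.cos θ)}

theorem real_valued_entire_on_two_lines (t₀ ω₀ θ₁ θ₂ : ℝ)
    (hθ : ∃ q : ℚ, θ₁ - θ₂ = (q : ℝ) * Real.pi) :
    ∃ Q : ℂ → ℂ, Differentiable ℂ Q ∧ (¬ ∃ c : ℂ, ∀ z, Q z = c) ∧
      entireOrder Q < ((2 : ℝ) : EReal) ∧
      ∀ z ∈ GammaStar (fullLine t₀ ω₀ θ₁ ∪ fullLine t₀ ω₀ θ₂), (Q z).im = 0 := by
  obtain ⟨q, hq⟩ := hθ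
  set z₀ : ℂ := (ω₀ : ℂ) + (t₀ : ℂ) * I with hz₀
  set n : ℕ := q.den with hn
  have hn1 : 1 ≤ n := q.pos
  set u : ℂ := Complex.exp (-(θ₁ : ℂ) * I) with hu
  set Q : ℂ → ℂ := fun z => (u * (z - z₀)) ^ n with hQ
  have huv : u * Complex.exp ((θ₁ : ℂ) * I) = 1 := by
    rw [hu, ← Complex.exp_add]; norm_num
  have habs : ∀ z : ℂ, ‖Q z‖ = ‖z - z₀‖ ^ n := by
    intro z
    have : ‖u‖ = 1 := by
      rw [hu, Complex.norm_exp]; norm_num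
    simp [hQ, norm_pow, norm_mul, this]
  -- the translation of points on the lines into complex form
  have hline : ∀ (θ r : ℝ) (z : ℂ), z.im = t₀ + r * Real.sin θ →
      z.re = ω₀ + r * Real.cos θ → z - z₀ = (r : ℂ) * Complex.exp ((θ:ℂ) * I) := by
    intro θ r z him hre
    apply Complex.ext <;>
    simp [Complex.exp_ofReal_mul_I_re, Complex.exp_ofReal_mul_I_im, him, hre, hz₀]
  -- real-valuedness on a line making a rational-multiple-of-π angle with θ₁
  have hval : ∀ (θ : ℝ) (m : ℤ), (n : ℝ) * (θ - θ₁) = (m : ℝ) * Real.pi →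
      ∀ r : ℝ, ∃ s : ℝ, (u * ((r:ℂ) * Complex.exp ((θ:ℂ) * I))) ^ n = (s:ℂ) := by
    intro θ m hR r
    refine ⟨r ^ n * (-1:ℝ) ^ m, ?_⟩
    have h1 : u * ((r:ℂ) * Complex.exp ((θ:ℂ) * I))
        = (r:ℂ) * Complex.exp (((θ - θ₁ : ℝ) : ℂ) * I) := by
      rw [hu, mul_left_comm, ← Complex.exp_add]
      congr 1
      push_cast
      ring
    rw [h1, mul_pow, ← Complex.exp_nat_mul]
    have h2 : (n : ℂ) * (((θ - θ₁ : ℝ) : ℂ) * I) = (m : ℂ) * ((Real.pi : ℂ) * I) := by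
      have hC : ((n:ℂ)) * (((θ - θ₁ : ℝ):ℂ)) = (m : ℂ) * (Real.pi : ℂ) := by
        exact_mod_cast congrArg (fun x : ℝ => (x : ℂ)) hR
      linear_combination I * hC
    rw [h2, Complex.exp_int_mul, Complex.exp_pi_mul_I]
    push_cast
    ring
  refine ⟨Q, ?_, ?_, ?_, ?_⟩
  · exact ((differentiable_const u).mul (differentiable_id.sub_const z₀)).pow n
  · rintro ⟨c, hc⟩
    have h0 : Q z₀ = 0 := by
      simp [hQ, zero_pow (by omega : n ≠ 0)]
    have h1 : Q (z₀ + Complex.exp ((θ₁ : ℂ) * I)) = 1 := by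
      simp [hQ, huv]
    rw [hc z₀] at h0; rw [hc _] at h1
    exact one_ne_zero (h1 ▸ h0)
  · -- order < 2
    set c : ℝ := ‖z₀‖ with hc
    have hc0 : 0 ≤ c := norm_nonneg z₀
    have hbd : ∀ r : ℝ, ∀ x ∈ (fun z => ‖Q z‖) '' Metric.closedBall (0 : ℂ) r,
        x ≤ (r + c) ^ n := by
      rintro r x ⟨z, hz, rfl⟩
      dsimp only
      rw [habs]
      refine pow_le_pow_left₀ (norm_nonneg _) ?_ n
      have hzr : ‖z‖ ≤ r := by
        simpa [Complex.dist_eq] using (Metric.mem_closedBall.1 hz)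
      calc ‖z - z₀‖ ≤ ‖z‖ + c := by
            simpa [hc] using norm_sub_le z z₀
        _ ≤ r + c := by linarith
    have hub : ∀ r : ℝ, 0 ≤ r → maxModulus Q r ≤ (r + c) ^ n := by
      intro r hr
      exact Real.sSup_le (hbd r) (by positivity)
    have hlb : ∀ r : ℝ, c ≤ r → (r - c) ^ n ≤ maxModulus Q r := by
      intro r hrc
      have hr0 : 0 ≤ r := hc0.trans hrc
      have hmem : ‖Q (r : ℂ)‖ ∈
          (fun z => ‖Q z‖) '' Metric.closedBall (0 : ℂ) r :=
        ⟨(r : ℂ), by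
          simp [Metric.mem_closedBall, Complex.dist_eq, Complex.norm_real,
            _root_.abs_of_nonneg hr0], rfl⟩
      refine le_trans ?_ (le_csSup ⟨(r + c) ^ n, fun x hx => hbd r x hx⟩ hmem)
      rw [habs]
      refine pow_le_pow_left₀ (by linarith) ?_ n
      calc r - c = ‖(r:ℂ)‖ - ‖z₀‖ := by
            rw [Complex.norm_real, Real.norm_eq_abs, _root_.abs_of_nonneg hr0, hc]
        _ ≤ ‖(r:ℂ) - z₀‖ := by
            simpa using norm_sub_norm_le (r:ℂ) z₀
    have hev : ∀ᶠ r : ℝ in atTop,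
        Real.log (Real.log (maxModulus Q r)) / Real.log r ≤ 1 := by
      filter_upwards [eventually_ge_atTop (c + 3), eventually_ge_atTop ((2:ℝ)^n),
        eventually_ge_atTop ((2*(n+1):ℝ)^2), eventually_ge_atTop 2] with r h1 h2 h3 h4
      have hr0 : (0:ℝ) ≤ r := by linarith
      have hlogr : 0 < Real.log r := Real.log_pos (by linarith)
      set M := maxModulus Q r with hM
      have hMlb : 3 ≤ M := by
        have := hlb r (by linarith)
        have h3n : (3:ℝ) ≤ (r - c) ^ n := by
          calc (3:ℝ) ≤ 3 ^ n := le_self_pow₀ (by norm_num) (by omega)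
            _ ≤ (r - c) ^ n := pow_le_pow_left₀ (by norm_num) (by linarith) n
        linarith
      have hMub : M ≤ r ^ (n + 1) := by
        have h1' : M ≤ (r + c) ^ n := hub r hr0
        have h2' : (r + c) ^ n ≤ (2 * r) ^ n :=
          pow_le_pow_left₀ (by linarith) (by linarith) n
        have h3' : (2 * r) ^ n ≤ r ^ (n + 1) := by
          rw [mul_pow, pow_succ']
          exact mul_le_mul_of_nonneg_right h2 (pow_nonneg hr0 n)
        linarith
      have hM0 : (0:ℝ) < M := by linarith
      have hlogM1 : 1 ≤ Real.log M := by
        rw [Real.le_log_iff_exp_le hM0]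
        calc Real.exp 1 ≤ 2.7182818286 := (Real.exp_one_lt_d9).le
          _ ≤ 3 := by norm_num
          _ ≤ M := hMlb
      have hlogMub : Real.log M ≤ (n + 1 : ℝ) * Real.log r := by
        calc Real.log M ≤ Real.log (r ^ (n+1)) := Real.log_le_log hM0 hMub
          _ = (n + 1 : ℝ) * Real.log r := by rw [Real.log_pow]; push_cast; ring
      have hsq : 2 * ((n:ℝ) + 1) ≤ Real.sqrt r := by
        have := Real.sqrt_le_sqrt h3
        rwa [Real.sqrt_sq (by positivity)] at this
      have hkey : (n + 1 : ℝ) * Real.log r ≤ r := by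
        have hlsq : Real.log r = 2 * Real.log (Real.sqrt r) := by
          rw [Real.log_sqrt hr0]; ring
        have hls : Real.log (Real.sqrt r) ≤ Real.sqrt r := Real.log_le_self (Real.sqrt_nonneg r)
        have hsq0 : (0:ℝ) ≤ Real.sqrt r := Real.sqrt_nonneg r
        calc (n + 1 : ℝ) * Real.log r = 2 * ((n:ℝ)+1) * Real.log (Real.sqrt r) := by
              rw [hlsq]; ring
          _ ≤ 2 * ((n:ℝ)+1) * Real.sqrt r := by
              apply mul_le_mul_of_nonneg_left hls (by positivity)
          _ ≤ Real.sqrt r * Real.sqrt r :=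
              mul_le_mul_of_nonneg_right hsq hsq0
          _ = r := Real.mul_self_sqrt hr0
      have hfinal : Real.log (Real.log M) ≤ Real.log r := by
        calc Real.log (Real.log M) ≤ Real.log ((n + 1 : ℝ) * Real.log r) :=
              Real.log_le_log (by linarith) hlogMub
          _ ≤ Real.log r := Real.log_le_log (by positivity) hkey
      rw [div_le_one hlogr]
      exact hfinal
    have hle : entireOrder Q ≤ ((1:ℝ) : EReal) := by
      exact limsup_le_of_le (by isBoundedDefault)
        (hev.mono fun r h => by exact_mod_cast EReal.coe_le_coe_iff.2 h)
    calc entireOrder Q ≤ ((1:ℝ) : EReal) := hle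
      _ < ((2:ℝ) : EReal) := by exact_mod_cast (by norm_num : (1:ℝ) < 2)
  · -- real values on the two lines
    have hden : ((n:ℝ)) * (q:ℝ) = (q.num:ℝ) := by
      rw [hn, Rat.cast_def]
      have h : ((q.den:ℝ)) ≠ 0 := Nat.cast_ne_zero.2 q.den_nz
      field_simp
    rintro z (⟨r, hr⟩ | ⟨r, hr⟩)
    · obtain ⟨him, hre⟩ := Prod.mk.injEq .. ▸ hr
      have hz := hline θ₁ r z him hre
      obtain ⟨s, hs⟩ := hval θ₁ 0 (by push_cast; ring) r
      rw [hQ]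
      simp only [hz, hs]
      exact Complex.ofReal_im s
    · obtain ⟨him, hre⟩ := Prod.mk.injEq .. ▸ hr
      have hz := hline θ₂ r z him hre
      obtain ⟨s, hs⟩ := hval θ₂ (-q.num) (by
        push_cast
        linear_combination (-(n:ℝ)) * hq - Real.pi * hden) r
      rw [hQ]
      simp only [hz, hs]
      exact Complex.ofReal_im s
end
end

section
/- Let Λ = ∪_{l=1}^{3} ((t_l, ω_l) + ℝ(sinθ₀, cosθ₀)) ⊆ ℝ², where θ₀ ∈ [0, 2π], (t_l, ω_l) ∈ ℝ² for l = 1, 2, 3, d_l := |(ω_l − ω₃) sinθ₀ − (t_l − t₃) cosθ₀| > 0 for l = 1, 2, and d₁/d₂ is rational. Then there exists a non-constant entire function Q : ℂ → ℂ whose order is less than 2 and which takes real values at every point of Γ*_Λ. -/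
open MeasureTheory Complex Filter Set

noncomputable section

theorem real_valued_entire_on_three_parallel_lines (θ₀ t₁ ω₁ t₂ ω₂ t₃ ω₃ d₁ d₂ : ℝ)
    (hθ : θ₀ ∈ Set.Icc 0 (2 * Real.pi))
    (hd₁ : d₁ = |(ω₁ - ω₃) * Real.sin θ₀ - (t₁ - t₃) * Real.cos θ₀|)
    (hd₂ : d₂ = |(ω₂ - ω₃) * Real.sin θ₀ - (t₂ - t₃) * Real.cos θ₀|)
    (hd₁pos : 0 < d₁) (hd₂pos : 0 < d₂)
    (hrat : ∃ q : ℚ, d₁ / d₂ = (q : ℝ)) :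
    ∃ Q : ℂ → ℂ, Differentiable ℂ Q ∧ (¬ ∃ c : ℂ, ∀ z, Q z = c) ∧
      entireOrder Q < ((2 : ℝ) : EReal) ∧
      ∀ z ∈ GammaStar (fullLine t₁ ω₁ θ₀ ∪ fullLine t₂ ω₂ θ₀ ∪ fullLine t₃ ω₃ θ₀),
        (Q z).im = 0 := by
  classical
  obtain ⟨q, hq⟩ := hrat
  set a₁ : ℝ := (ω₁ - ω₃) * Real.sin θ₀ - (t₁ - t₃) * Real.cos θ₀ with ha₁def
  set a₂ : ℝ := (ω₂ - ω₃) * Real.sin θ₀ - (t₂ - t₃) * Real.cos θ₀ with ha₂def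
  have ha₁ : a₁ ≠ 0 := abs_pos.mp (hd₁ ▸ hd₁pos)
  have ha₂ : a₂ ≠ 0 := abs_pos.mp (hd₂ ▸ hd₂pos)
  have habs : |a₁ / a₂| = (q : ℝ) := by
    rw [abs_div, ← hd₁, ← hd₂]; exact hq
  obtain ⟨q₀, hq₀⟩ : ∃ q₀ : ℚ, a₁ / a₂ = (q₀ : ℝ) := by
    rcases abs_cases (a₁ / a₂) with ⟨h, _⟩ | ⟨h, _⟩
    · exact ⟨q, by rw [← habs, h]⟩
    · exact ⟨-q, by push_cast; linarith [habs, h]⟩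
  rw [div_eq_iff ha₂] at hq₀
  set c : ℝ := a₂ / (q₀.den : ℝ) with hcdef
  have hden : (q₀.den : ℝ) ≠ 0 := Nat.cast_ne_zero.mpr q₀.den_nz
  have hc : c ≠ 0 := div_ne_zero ha₂ hden
  have ha₂c : a₂ = ((q₀.den : ℤ) : ℝ) * c := by
    rw [hcdef]; push_cast; field_simp
  have ha₁c : a₁ = ((q₀.num : ℤ) : ℝ) * c := by
    rw [hq₀, Rat.cast_def, hcdef]; push_cast; field_simp
  set w₃ : ℂ := (ω₃ : ℝ) + (t₃ : ℝ) * Complex.I with hw₃def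
  set β : ℂ := ((Real.pi / c : ℝ) : ℂ) * (((Real.cos θ₀ : ℝ) : ℂ) - ((Real.sin θ₀ : ℝ) : ℂ) * Complex.I) with hβdef
  have hβre : β.re = (Real.pi / c) * Real.cos θ₀ := by
    simp only [hβdef, Complex.mul_re, Complex.sub_re, Complex.sub_im, Complex.mul_im,
      Complex.ofReal_re, Complex.ofReal_im, Complex.I_re, Complex.I_im]
    ring
  have hβim : β.im = -((Real.pi / c) * Real.sin θ₀) := by
    simp only [hβdef, Complex.mul_re, Complex.sub_re, Complex.sub_im, Complex.mul_im,
      Complex.ofReal_re, Complex.ofReal_im, Complex.I_re, Complex.I_im]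
    ring
  have hβne : β ≠ 0 := by
    intro h
    have h1 : β.re = 0 := by rw [h]; simp
    have h2 : β.im = 0 := by rw [h]; simp
    rw [hβre] at h1; rw [hβim] at h2
    have hπc : Real.pi / c ≠ 0 := div_ne_zero Real.pi_ne_zero hc
    have hcos : Real.cos θ₀ = 0 := by
      rcases mul_eq_zero.mp h1 with h | h
      · exact absurd h hπc
      · exact h
    have hsin : Real.sin θ₀ = 0 := by
      have := neg_eq_zero.mp h2
      rcases mul_eq_zero.mp this with h | h
      · exact absurd h hπc
      · exact h
    have := Real.sin_sq_add_cos_sq θ₀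
    rw [hsin, hcos] at this; norm_num at this
  set Q : ℂ → ℂ := fun z => Complex.exp (β * (z - w₃)) with hQdef
  have key : ∀ t ω : ℝ, ∀ k : ℤ,
      (ω - ω₃) * Real.sin θ₀ - (t - t₃) * Real.cos θ₀ = (k : ℝ) * c →
      ∀ z ∈ GammaStar (fullLine t ω θ₀), (Q z).im = 0 := by
    intro t ω k hk z hz
    obtain ⟨r, hr⟩ := hz
    have h1 : z.im = t + r * Real.sin θ₀ := congrArg Prod.fst hr
    have h2 : z.re = ω + r * Real.cos θ₀ := congrArg Prod.snd hr
    have him : (β * (z - w₃)).im = (-k : ℤ) * Real.pi := by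
      have hexp : (β * (z - w₃)).im
          = (Real.pi / c) * (Real.cos θ₀ * (z.im - t₃) - Real.sin θ₀ * (z.re - ω₃)) := by
        simp [Complex.mul_im, Complex.sub_re, Complex.sub_im, hβre, hβim, hw₃def]
        ring
      rw [hexp, h1, h2]
      have hlin : Real.cos θ₀ * (t + r * Real.sin θ₀ - t₃)
          - Real.sin θ₀ * (ω + r * Real.cos θ₀ - ω₃) = -((k : ℝ) * c) := by
        rw [← hk]; ring
      rw [hlin]
      push_cast
      field_simp
    rw [hQdef]
    simp only [Complex.exp_im, him]
    rw [Real.sin_int_mul_pi]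
    simp
  refine ⟨Q, ?_, ?_, ?_, ?_⟩
  · -- differentiable
    exact Complex.differentiable_exp.comp ((differentiable_id.sub_const w₃).const_mul β)
  · -- non-constant
    rintro ⟨c₀, hc₀⟩
    have h1 : Complex.exp (β * (w₃ - w₃)) = c₀ := hc₀ w₃
    have h2 : Complex.exp (β * (w₃ + β⁻¹ - w₃)) = c₀ := hc₀ (w₃ + β⁻¹)
    simp only [sub_self, mul_zero, Complex.exp_zero] at h1
    have h3 : β * (w₃ + β⁻¹ - w₃) = 1 := by
      field_simp
      ring
    rw [h3] at h2
    rw [← h1] at h2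
    have h4 : Complex.exp 1 = ((Real.exp 1 : ℝ) : ℂ) := by
      rw [Complex.ofReal_exp]; norm_num
    rw [h4] at h2
    have h5 : (Real.exp 1 : ℝ) = 1 := by
      have := congrArg Complex.re h2
      rwa [Complex.ofReal_re, Complex.one_re] at this
    have := Real.add_one_lt_exp (x := 1) one_ne_zero
    linarith
  · -- order < 2
    set K : ℝ := ‖β‖ with hKdef
    set C : ℝ := K * ‖w₃‖ with hCdef
    have hK0 : 0 ≤ K := norm_nonneg β
    have hC0 : 0 ≤ C := mul_nonneg hK0 (norm_nonneg w₃)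
    have hbdd : ∀ r : ℝ, 0 ≤ r → ∀ x ∈ (fun z => ‖Q z‖) '' Metric.closedBall (0 : ℂ) r,
        x ≤ Real.exp (K * r + C) := by
      rintro r hr x ⟨z, hz, rfl⟩
      rw [hQdef]
      simp only
      rw [Complex.norm_exp]
      apply Real.exp_le_exp.mpr
      calc (β * (z - w₃)).re ≤ ‖β * (z - w₃)‖ := Complex.re_le_norm _
        _ = K * ‖z - w₃‖ := by rw [norm_mul]
        _ ≤ K * (‖z‖ + ‖w₃‖) := by
            exact mul_le_mul_of_nonneg_left (norm_sub_le z w₃) hK0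
        _ ≤ K * (r + ‖w₃‖) := by
            apply mul_le_mul_of_nonneg_left _ hK0
            have hz' : ‖z‖ ≤ r := by
              rw [Metric.mem_closedBall, Complex.dist_eq, sub_zero] at hz
              exact hz
            linarith
        _ = K * r + C := by rw [hCdef]; ring
    have hne : ∀ r : ℝ, 0 ≤ r →
        ((fun z => ‖Q z‖) '' Metric.closedBall (0 : ℂ) r).Nonempty :=
      fun r hr => ⟨_, ⟨0, Metric.mem_closedBall_self hr, rfl⟩⟩
    have hMub : ∀ r : ℝ, 0 ≤ r → maxModulus Q r ≤ Real.exp (K * r + C) := by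
      intro r hr
      exact csSup_le (hne r hr) (hbdd r hr)
    have hMlb : ∀ r : ℝ, 0 ≤ r → Real.exp (-C) ≤ maxModulus Q r := by
      intro r hr
      have hmem : ‖Q 0‖ ∈ (fun z => ‖Q z‖) '' Metric.closedBall (0 : ℂ) r :=
        ⟨0, Metric.mem_closedBall_self hr, rfl⟩
      have hle : Real.exp (-C) ≤ ‖Q 0‖ := by
        rw [hQdef]
        simp only
        rw [Complex.norm_exp]
        apply Real.exp_le_exp.mpr
        have h1 : -‖β * (0 - w₃)‖ ≤ (β * (0 - w₃)).re :=
          (abs_le.mp (Complex.abs_re_le_norm _)).1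
        have h2 : ‖β * (0 - w₃)‖ = C := by
          rw [norm_mul, hCdef]
          congr 1
          rw [zero_sub, norm_neg]
        linarith
      exact le_trans hle (le_csSup ⟨Real.exp (K * r + C), hbdd r hr⟩ hmem)
    set D : ℝ := Real.log (K + C + 1) with hDdef
    have hD0 : 0 ≤ D := Real.log_nonneg (by linarith)
    have hev : ∀ᶠ r : ℝ in atTop,
        ((Real.log (Real.log (maxModulus Q r)) / Real.log r : ℝ) : EReal) ≤ ((3/2 : ℝ) : EReal) := by
      filter_upwards [eventually_ge_atTop (max 1 (Real.exp (2 * D + 2)))] with r hr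
      have hr1 : (1 : ℝ) ≤ r := le_trans (le_max_left _ _) hr
      have hr0 : (0 : ℝ) ≤ r := by linarith
      have hrexp : Real.exp (2 * D + 2) ≤ r := le_trans (le_max_right _ _) hr
      have hlogr : 2 * D + 2 ≤ Real.log r := by
        rw [← Real.log_exp (2 * D + 2)]
        exact Real.log_le_log (Real.exp_pos _) hrexp
      have hlogrpos : 0 < Real.log r := by linarith
      set L : ℝ := Real.log (maxModulus Q r) with hLdef
      have hMpos : 0 < maxModulus Q r := lt_of_lt_of_le (Real.exp_pos _) (hMlb r hr0)
      have hub : L ≤ K * r + C := by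
        rw [hLdef]
        calc Real.log (maxModulus Q r) ≤ Real.log (Real.exp (K * r + C)) :=
              Real.log_le_log hMpos (hMub r hr0)
          _ = K * r + C := Real.log_exp _
      have hlb : -C ≤ L := by
        rw [hLdef, ← Real.log_exp (-C)]
        exact Real.log_le_log (Real.exp_pos _) (hMlb r hr0)
      have habsL : |L| ≤ K * r + C := by
        rw [abs_le]
        constructor
        · nlinarith
        · exact hub
      have hkey : Real.log L ≤ (3/2) * Real.log r := by
        rcases eq_or_ne L 0 with hL0 | hL0
        · rw [hL0, Real.log_zero]; positivity
        · rw [← Real.log_abs]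
          have hLpos : 0 < |L| := abs_pos.mpr hL0
          calc Real.log |L| ≤ Real.log ((K + C + 1) * r) := by
                apply Real.log_le_log hLpos
                calc |L| ≤ K * r + C := habsL
                  _ ≤ (K + C + 1) * r := by nlinarith
            _ = D + Real.log r := by
                rw [Real.log_mul (by linarith) (by linarith), hDdef]
            _ ≤ (3/2) * Real.log r := by linarith
      rw [EReal.coe_le_coe_iff, div_le_iff₀ hlogrpos]
      exact hkey
    have hle : entireOrder Q ≤ ((3/2 : ℝ) : EReal) := by
      rw [entireOrder]
      exact limsup_le_of_le (by isBoundedDefault) hev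
    refine lt_of_le_of_lt hle ?_
    rw [EReal.coe_lt_coe_iff]
    norm_num
  · -- real on lines
    intro z hz
    rcases hz with (h | h) | h
    · exact key t₁ ω₁ q₀.num ha₁c z h
    · exact key t₂ ω₂ (q₀.den : ℤ) ha₂c z h
    · exact key t₃ ω₃ 0 (by simp) z h
end
end
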